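/- arXiv:2509.15165 — 2 statements merged into one kernel-verified Lean document; each statement's English description precedes it below -/
import Mathlib

section
/- If f is a model satisfying Invariant Aggregation, then for every tuple of marginals p and every s in [z], F_{f(p)}(s) = F_{f(b_x)}(1,...,1), where x = (F_{p₁}(s₁),...,F_{pₙ}(sₙ)) and b_x = (b_{x₁},...,b_{xₙ}) with b_t the distribution on {1,2} giving mass t to 1 and 1−t to 2. That is, the CDF of f(p) at s is determined solely by the vector of marginal CDF values at s. -/
open MeasureTheory Finset Function

noncomputable section

/-- The uniform probability measure on `[0,1] ⊆ ℝ`. -/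
def unif01 : Measure ℝ := volume.restrict (Set.Icc 0 1)

/-- `q` is a probability mass function on `[w] = {1,…,w}`. -/
def IsPMF (w : ℕ) (q : ℕ → ℝ) : Prop :=
  (∀ t, 0 ≤ q t) ∧ (∀ t, t ∉ Finset.Icc 1 w → q t = 0) ∧
    ∑ t ∈ Finset.Icc 1 w, q t = 1

/-- Collapse of adjacent bins `j` and `j+1`: `q^j(t) = q(t)·1{t ≤ j} + q(t+1)·1{t ≥ j}`. -/
def collapsePM (j : ℕ) (q : ℕ → ℝ) : ℕ → ℝ :=
  fun t => (if t ≤ j then q t else 0) + (if j ≤ t then q (t + 1) else 0)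

/-- CDF of a pmf on `{1,…,w}`. -/
def pmfCDF (q : ℕ → ℝ) (t : ℕ) : ℝ := ∑ s ∈ Finset.Icc 1 t, q s

/-- The product box `∏ᵢ {1,…,zᵢ}`. -/
def prodBox {n : ℕ} (z : Fin n → ℕ) : Finset (Fin n → ℕ) :=
  Fintype.piFinset fun i => Finset.Icc 1 (z i)

/-- `μ` is a joint pmf on `∏ᵢ {1,…,zᵢ}`. -/
def IsJointPMF {n : ℕ} (z : Fin n → ℕ) (μ : (Fin n → ℕ) → ℝ) : Prop :=
  (∀ s, 0 ≤ μ s) ∧ (∀ s, s ∉ prodBox z → μ s = 0) ∧ ∑ s ∈ prodBox z, μ s = 1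

/-- The `i`-th marginal of a joint pmf. -/
def jointMarginal {n : ℕ} (z : Fin n → ℕ) (μ : (Fin n → ℕ) → ℝ) (i : Fin n) (t : ℕ) : ℝ :=
  ∑ s ∈ (prodBox z).filter fun s => s i = t, μ s

/-- Joint CDF of a joint pmf. -/
def jointCDF {n : ℕ} (μ : (Fin n → ℕ) → ℝ) (s : Fin n → ℕ) : ℝ :=
  ∑ t ∈ Fintype.piFinset fun i => Finset.Icc 1 (s i), μ t

/-- A (candidate) model: assigns to each `z` and tuple of marginals a joint pmf. -/
abbrev Model (n : ℕ) := (z : Fin n → ℕ) → (Fin n → ℕ → ℝ) → (Fin n → ℕ) → ℝ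

/-- `f` is a model: it returns a joint pmf whose marginals are the inputs. -/
def IsModel {n : ℕ} (f : Model n) : Prop :=
  ∀ z p, (∀ i, IsPMF (z i) (p i)) →
    IsJointPMF z (f z p) ∧ ∀ i t, jointMarginal z (f z p) i t = p i t

/-- Invariant Aggregation: merging adjacent bins `j, j+1` of marginal `i`
does not affect the joint distribution over unaffected values. -/
def SatisfiesIA {n : ℕ} (f : Model n) : Prop :=
  ∀ z p, (∀ i, IsPMF (z i) (p i)) → ∀ i : Fin n, ∀ j ∈ Finset.Icc 1 (z i - 1),
    ∀ s ∈ prodBox (Function.update z i (z i - 1)),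
      f (Function.update z i (z i - 1)) (Function.update p i (collapsePM j (p i))) s =
        (if s i ≤ j then f z p s else 0) +
          (if j ≤ s i then f z p (Function.update s i (s i + 1)) else 0)

/-- A copula measure: a probability measure on `[0,1]^ι` with standard uniform marginals. -/
def IsCopulaMeasure {ι : Type*} [Fintype ι] (μ : Measure (ι → ℝ)) : Prop :=
  IsProbabilityMeasure μ ∧ ∀ i : ι, μ.map (fun t => t i) = unif01

/-- `C` is a copula: the CDF of a probability measure with uniform marginals. -/
def IsCopula {ι : Type*} [Fintype ι] (C : (ι → ℝ) → ℝ) : Prop :=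
  ∃ μ : Measure (ι → ℝ), IsCopulaMeasure μ ∧
    ∀ x : ι → ℝ, (∀ i, x i ∈ Set.Icc (0 : ℝ) 1) →
      (μ {t | ∀ i, t i ≤ x i}).toReal = C x

/-- `f` is a copula model with copula `C`: `F_{f(p)}(s) = C(F_{p₁}(s₁),…,F_{pₙ}(sₙ))`. -/
def IsCopulaModelWith {n : ℕ} (f : Model n) (C : (Fin n → ℝ) → ℝ) : Prop :=
  IsCopula C ∧ ∀ z p, (∀ i, IsPMF (z i) (p i)) → ∀ s ∈ prodBox z,
    jointCDF (f z p) s = C fun i => pmfCDF (p i) (s i)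

/-- The binary distribution `b_t` on `{1,2}` with `b_t(1) = t`, `b_t(2) = 1 - t`. -/
def binPMF (t : ℝ) : ℕ → ℝ := fun s => if s = 1 then t else if s = 2 then 1 - t else 0

/-- `σ` is a permutation of `{1,…,w}` (fixing everything else). -/
def PermOn (w : ℕ) (σ : Equiv.Perm ℕ) : Prop := ∀ t ∉ Finset.Icc 1 w, σ t = t

/-- `M`-neutrality for `M = {i : (i : ℕ) < m}`: relabelling the bins of a marginal in `M`
just relabels the joint distribution accordingly. -/
def MNeutral {n : ℕ} (f : Model n) (m : ℕ) : Prop :=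
  ∀ z p, (∀ i, IsPMF (z i) (p i)) → ∀ i : Fin n, (i : ℕ) < m →
    ∀ σ : Equiv.Perm ℕ, PermOn (z i) σ → ∀ s ∈ prodBox z,
      f z (Function.update p i fun t => p i (σ t)) s =
        f z p (Function.update s i (σ (s i)))

/-- A coupling of two pmfs `q₁` on `[w₁]`, `q₂` on `[w₂]`. -/
def IsCoupling (w₁ w₂ : ℕ) (q₁ q₂ : ℕ → ℝ) (μ : ℕ × ℕ → ℝ) : Prop :=
  (∀ a, 0 ≤ μ a) ∧ (∀ a, a ∉ (Finset.Icc 1 w₁) ×ˢ (Finset.Icc 1 w₂) → μ a = 0) ∧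
    (∀ s, ∑ t ∈ Finset.Icc 1 w₂, μ (s, t) = q₁ s) ∧
    (∀ t, ∑ s ∈ Finset.Icc 1 w₁, μ (s, t) = q₂ t)

/-- Diagonal mass of a coupling. -/
def diagMass (w₁ w₂ : ℕ) (μ : ℕ × ℕ → ℝ) : ℝ :=
  ∑ s ∈ Finset.Icc 1 (min w₁ w₂), μ (s, s)

/-- A maximal coupling: a coupling maximizing the diagonal mass. -/
def IsMaxCoupling (w₁ w₂ : ℕ) (q₁ q₂ : ℕ → ℝ) (μ : ℕ × ℕ → ℝ) : Prop :=
  IsCoupling w₁ w₂ q₁ q₂ μ ∧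
    ∀ ν, IsCoupling w₁ w₂ q₁ q₂ ν → diagMass w₁ w₂ ν ≤ diagMass w₁ w₂ μ

/-!
Merging the adjacent bins `j, j + 1` of the `i`-th marginal changes the joint CDF of `f(p)` and the
`i`-th marginal CDF in the same way: both are evaluated at the point `collapseCut j sᵢ` of the finer
scale. Merging bins away from the cut point therefore changes neither side of the claim, and reduces
every marginal to at most two bins, cut at `sᵢ = 1`. A one-bin marginal is the merge of `b₁`, whose
second bin carries no mass, so it may be replaced by `b₁`; once every marginal has two bins, it is
`b_{xᵢ}`.
-/

def collapseCut (j m : ℕ) : ℕ := if m < j then m else m + 1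

lemma pmfCDF_succ (q : ℕ → ℝ) (m : ℕ) : pmfCDF q (m + 1) = pmfCDF q m + q (m + 1) :=
  sum_Icc_succ_top (by omega) q

lemma pmfCDF_collapsePM {j : ℕ} (hj : 1 ≤ j) (q : ℕ → ℝ) (m : ℕ) :
    pmfCDF (collapsePM j q) m = pmfCDF q (collapseCut j m) := by
  induction m with
  | zero => rw [collapseCut, if_pos (by omega : 0 < j)]; simp [pmfCDF]
  | succ m ih =>
    rw [pmfCDF_succ, ih, collapseCut, collapseCut, collapsePM]
    rcases lt_trichotomy (m + 1) j with h | rfl | h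
    · rw [if_pos (by omega : m < j), if_pos h, if_pos h.le, if_neg (by omega : ¬j ≤ m + 1),
        add_zero, pmfCDF_succ]
    · rw [if_pos (lt_add_one m), if_neg (lt_irrefl _), if_pos le_rfl, if_pos le_rfl,
        pmfCDF_succ q (m + 1), pmfCDF_succ, ← add_assoc (pmfCDF q m)]
    · rw [if_neg (by omega : ¬m < j), if_neg (by omega : ¬m + 1 < j),
        if_neg (by omega : ¬m + 1 ≤ j), if_pos h.le, zero_add]
      exact (pmfCDF_succ q (m + 1)).symm

lemma IsPMF.one_le {w : ℕ} {q : ℕ → ℝ} (hq : IsPMF w q) : 1 ≤ w := by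
  by_contra! hw
  have := hq.2.2
  simp [Nat.lt_one_iff.1 hw] at this

lemma isPMF_collapsePM {w j : ℕ} {q : ℕ → ℝ} (hq : IsPMF w q) (hj : j ∈ Icc 1 (w - 1)) :
    IsPMF (w - 1) (collapsePM j q) := by
  obtain ⟨hnn, hsupp, hsum⟩ := hq
  rw [mem_Icc] at hj
  refine ⟨fun t => add_nonneg (ite_nonneg (hnn _) le_rfl) (ite_nonneg (hnn _) le_rfl),
    fun t ht => ?_, ?_⟩
  · rw [mem_Icc] at ht
    have hlow : t ≤ j → q t = 0 := fun _ => hsupp t (by rw [mem_Icc]; omega)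
    have hhigh : j ≤ t → q (t + 1) = 0 := fun _ => hsupp (t + 1) (by rw [mem_Icc]; omega)
    rw [collapsePM, ite_eq_right_iff.2 hlow, ite_eq_right_iff.2 hhigh, add_zero]
  · rw [← hsum, ← pmfCDF, pmfCDF_collapsePM hj.1, collapseCut, if_neg (by omega),
      Nat.sub_add_cancel (by omega), pmfCDF]

lemma isPMF_binPMF {t : ℝ} (h0 : 0 ≤ t) (h1 : t ≤ 1) : IsPMF 2 (binPMF t) := by
  refine ⟨fun u => ?_, fun u hu => ?_, ?_⟩
  · unfold binPMF; split_ifs <;> linarith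
  · rw [mem_Icc] at hu
    unfold binPMF; split_ifs <;> first | rfl | omega
  · simp [binPMF, show Icc 1 2 = {1, 2} from rfl]

lemma IsPMF.binPMF_pmfCDF_one {q : ℕ → ℝ} (hq : IsPMF 2 q) : binPMF (pmfCDF q 1) = q := by
  obtain ⟨-, hsupp, hsum⟩ := hq
  rw [show Icc 1 2 = {1, 2} from rfl, sum_pair (by norm_num)] at hsum
  funext t
  simp only [binPMF, pmfCDF, Icc_self, sum_singleton]
  split_ifs with h1 h2
  · rw [h1]
  · rw [h2]; linarith
  · exact (hsupp t (by simp only [mem_Icc]; omega)).symm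

lemma IsPMF.collapsePM_one_binPMF_one {q : ℕ → ℝ} (hq : IsPMF 1 q) :
    collapsePM 1 (binPMF 1) = q := by
  obtain ⟨-, hsupp, hsum⟩ := hq
  rw [Icc_self, sum_singleton] at hsum
  funext t
  match t with
  | 0 => simp [collapsePM, binPMF, hsupp 0 (by simp)]
  | 1 => simp [collapsePM, binPMF, hsum]
  | t + 2 => simp [collapsePM, binPMF, hsupp (t + 2) (by simp)]

lemma sum_update_lt_sum {ι M : Type*} [Fintype ι] [DecidableEq ι] [AddCommMonoid M]
    [PartialOrder M] [IsOrderedCancelAddMonoid M] (g : ι → M) {i : ι} {a : M} (h : a < g i) :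
    ∑ k, update g i a k < ∑ k, g k := by
  refine sum_lt_sum (fun k _ => ?_) ⟨i, mem_univ i, by simpa⟩
  rcases eq_or_ne k i with rfl | hk
  · simpa using h.le
  · simp [hk]

section

variable {n : ℕ}

lemma mem_prodBox {z t : Fin n → ℕ} : t ∈ prodBox z ↔ ∀ i, 1 ≤ t i ∧ t i ≤ z i := by
  simp [prodBox]

lemma prodBox_subset {s z : Fin n → ℕ} (h : s ∈ prodBox z) : prodBox s ⊆ prodBox z := by
  intro t ht
  rw [mem_prodBox] at *
  exact fun i => ⟨(ht i).1, (ht i).2.trans (h i).2⟩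

lemma filter_prodBox_le {s : Fin n → ℕ} {i : Fin n} {m : ℕ} (h : m ≤ s i) :
    {t ∈ prodBox s | t i ≤ m} = prodBox (update s i m) := by
  ext t
  simp only [mem_filter, mem_prodBox, update_apply]
  constructor
  · rintro ⟨ht, hm⟩ k
    split_ifs with hk
    · subst hk; exact ⟨(ht k).1, hm⟩
    · exact ht k
  · intro ht
    refine ⟨fun k => ?_, by simpa using (ht i).2⟩
    have := ht k
    split_ifs at this with hk
    · subst hk; omega
    · exact this

lemma update_mem_prodBox_update {z t : Fin n → ℕ} (ht : t ∈ prodBox z) (i : Fin n) {a b : ℕ}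
    (ha : 1 ≤ a) (hab : a ≤ b) : update t i a ∈ prodBox (update z i b) := by
  rw [mem_prodBox] at ht ⊢
  intro k
  rcases eq_or_ne k i with rfl | hk
  · simp [ha, hab]
  · simp [hk, ht k]

lemma sum_filter_prodBox_shift (g : (Fin n → ℕ) → ℝ) (s : Fin n → ℕ) (i : Fin n) {j : ℕ}
    (hj : 1 ≤ j) :
    ∑ t ∈ prodBox s with j ≤ t i, g (update t i (t i + 1)) =
      ∑ t ∈ prodBox (update s i (s i + 1)) with j < t i, g t := by
  refine sum_nbij' (fun t => update t i (t i + 1)) (fun t => update t i (t i - 1))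
    (fun t ht => ?_) (fun t ht => ?_) (fun t _ => by simp) (fun t ht => ?_) fun _ _ => rfl
  · rw [mem_filter] at ht ⊢
    refine ⟨update_mem_prodBox_update ht.1 i (by omega) ?_, by simp; omega⟩
    simpa using ((mem_prodBox.1 ht.1) i).2
  · rw [mem_filter] at ht ⊢
    have hti := (mem_prodBox.1 ht.1 i).2
    rw [update_self] at hti
    have := update_mem_prodBox_update ht.1 i (a := t i - 1) (b := s i) (by omega) (by omega)
    rw [update_idem, update_eq_self] at this
    exact ⟨this, by simp; omega⟩
  · have : t i - 1 + 1 = t i := Nat.sub_add_cancel (by have := (mem_filter.1 ht).2; omega)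
    simp [this]

lemma jointCDF_eq_sum_prodBox (μ : (Fin n → ℕ) → ℝ) (s : Fin n → ℕ) :
    jointCDF μ s = ∑ t ∈ prodBox s, μ t := rfl

lemma jointCDF_const_one (μ : (Fin n → ℕ) → ℝ) : jointCDF μ (fun _ => 1) = μ (fun _ => 1) := by
  have : prodBox (fun _ : Fin n => 1) = {fun _ => 1} := by
    ext t
    simp only [mem_prodBox, mem_singleton, funext_iff, ← le_antisymm_iff]
    exact forall_congr' fun _ => eq_comm
  rw [jointCDF_eq_sum_prodBox, this, sum_singleton]

lemma isPMF_update {z : Fin n → ℕ} {p : Fin n → ℕ → ℝ} (hp : ∀ k, IsPMF (z k) (p k)) (i : Fin n)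
    {w : ℕ} {q : ℕ → ℝ} (hq : IsPMF w q) : ∀ k, IsPMF (update z i w k) (update p i q k) := by
  intro k
  rcases eq_or_ne k i with rfl | hk
  · simpa using hq
  · simpa [hk] using hp k

section

variable {f : Model n} {z : Fin n → ℕ} {p : Fin n → ℕ → ℝ}

lemma IsModel.apply_eq_zero (hf : IsModel f) (hp : ∀ k, IsPMF (z k) (p k)) {t : Fin n → ℕ}
    (i : Fin n) (ht : p i (t i) = 0) : f z p t = 0 := by
  obtain ⟨⟨hnn, hsupp, -⟩, hmarg⟩ := hf z p hp
  by_cases htz : t ∈ prodBox z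
  · refine le_antisymm ?_ (hnn t)
    rw [← ht, ← hmarg i (t i)]
    exact single_le_sum (fun u _ => hnn u) (mem_filter.2 ⟨htz, rfl⟩)
  · exact hsupp t htz

lemma IsModel.jointCDF_update_succ (hf : IsModel f) (hp : ∀ k, IsPMF (z k) (p k))
    {s : Fin n → ℕ} {i : Fin n} (h : p i (s i + 1) = 0) :
    jointCDF (f z p) (update s i (s i + 1)) = jointCDF (f z p) s := by
  have hsupp : ∀ t ∈ prodBox (update s i (s i + 1)), f z p t ≠ 0 → t i ≤ s i := by
    intro t ht hne
    have hti := (mem_prodBox.1 ht i).2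
    rw [update_self] at hti
    by_contra hlt
    exact hne (hf.apply_eq_zero hp i (by rwa [show t i = s i + 1 by omega]))
  rw [jointCDF_eq_sum_prodBox, jointCDF_eq_sum_prodBox, ← sum_filter_of_ne hsupp,
    filter_prodBox_le (by simp), update_idem, update_eq_self]

lemma SatisfiesIA.jointCDF_collapse (hIA : SatisfiesIA f) (hp : ∀ k, IsPMF (z k) (p k))
    {i : Fin n} {j : ℕ} (hj : j ∈ Icc 1 (z i - 1)) {s : Fin n → ℕ}
    (hs : s ∈ prodBox (update z i (z i - 1))) :
    jointCDF (f (update z i (z i - 1)) (update p i (collapsePM j (p i)))) s =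
      jointCDF (f z p) (update s i (collapseCut j (s i))) := by
  have hj1 : 1 ≤ j := (mem_Icc.1 hj).1
  rw [jointCDF_eq_sum_prodBox, jointCDF_eq_sum_prodBox,
    sum_congr rfl fun t ht => hIA z p hp i j hj t (prodBox_subset hs ht), sum_add_distrib,
    ← sum_filter, ← sum_filter, collapseCut]
  split_ifs with hsj
  · have hle : ∀ t ∈ prodBox s, t i < j := fun t ht => (mem_prodBox.1 ht i).2.trans_lt hsj
    rw [update_eq_self, filter_true_of_mem fun t ht => (hle t ht).le,
      filter_false_of_mem fun t ht => (hle t ht).not_ge, sum_empty, add_zero]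
  · have hlow : {t ∈ prodBox s | t i ≤ j} =
        {t ∈ prodBox (update s i (s i + 1)) | t i ≤ j} := by
      rw [filter_prodBox_le (by omega), filter_prodBox_le (by simp; omega), update_idem]
    rw [hlow, sum_filter_prodBox_shift _ _ _ hj1]
    simp_rw [← not_le]
    exact sum_filter_add_sum_filter_not _ _ _

lemma pmfCDF_update_collapsePM {j : ℕ} (hj : 1 ≤ j) (p : Fin n → ℕ → ℝ) (s : Fin n → ℕ)
    (i k : Fin n) : pmfCDF (update p i (collapsePM j (p i)) k) (s k) =
      pmfCDF (p k) (update s i (collapseCut j (s i)) k) := by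
  rcases eq_or_ne k i with rfl | hk
  · simp [pmfCDF_collapsePM hj]
  · simp [hk]

lemma jointCDF_ones_eq_update_binPMF_one (hf : IsModel f) (hIA : SatisfiesIA f)
    (hp : ∀ k, IsPMF (z k) (p k)) {i : Fin n} (hzi : z i = 1) :
    jointCDF (f z p) (fun _ => 1) =
      jointCDF (f (update z i 2) (update p i (binPMF 1))) (fun _ => 1) := by
  have hp' := isPMF_update hp i (isPMF_binPMF zero_le_one le_rfl)
  have hones : (fun _ => 1) ∈ prodBox (update (update z i 2) i (update z i 2 i - 1)) := by
    rw [update_self, update_idem, update_eq_self_iff.2 hzi.symm, mem_prodBox]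
    exact fun k => ⟨le_rfl, (hp k).one_le⟩
  have hcollapse := hIA.jointCDF_collapse hp' (j := 1) (by simp) hones
  rw [update_self, update_idem, update_eq_self_iff.2 hzi.symm, update_self,
    (hzi ▸ hp i : IsPMF 1 (p i)).collapsePM_one_binPMF_one, update_idem,
    update_eq_self] at hcollapse
  calc jointCDF (f z p) (fun _ => 1)
      = jointCDF (f (update z i 2) (update p i (binPMF 1))) (update (fun _ => 1) i 2) :=
        hcollapse
    _ = _ := hf.jointCDF_update_succ hp' (by simp [binPMF])

end

theorem jointCDF_ones_eq_binary {f : Model n} (hf : IsModel f) (hIA : SatisfiesIA f)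
    {z : Fin n → ℕ} {p : Fin n → ℕ → ℝ} (hp : ∀ k, IsPMF (z k) (p k))
    (hz : ∀ k, z k = 1 ∨ z k = 2) :
    jointCDF (f z p) (fun _ => 1) =
      jointCDF (f (fun _ => 2) (fun k => binPMF (pmfCDF (p k) 1))) (fun _ => 1) := by
  by_cases hone : ∃ i, z i = 1
  · obtain ⟨i, hzi⟩ := hone
    have hz' : ∀ k, update z i 2 k = 1 ∨ update z i 2 k = 2 := by
      intro k
      rcases eq_or_ne k i with rfl | hk
      · simp
      · simpa [hk] using hz k
    rw [jointCDF_ones_eq_update_binPMF_one hf hIA hp hzi,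
      jointCDF_ones_eq_binary hf hIA (isPMF_update hp i (isPMF_binPMF zero_le_one le_rfl)) hz']
    congr 3
    funext k
    rcases eq_or_ne k i with rfl | hk
    · have hpk := (hp k).2.2
      rw [hzi, Icc_self, sum_singleton] at hpk
      simp [pmfCDF, binPMF, hpk]
    · simp [hk]
  · push Not at hone
    obtain rfl : z = fun _ => 2 := funext fun k => (hz k).resolve_left (hone k)
    rw [show (fun k => binPMF (pmfCDF (p k) 1)) = p from
      funext fun k => (hp k).binPMF_pmfCDF_one]
termination_by ∑ k, (2 - z k)
decreasing_by
  have := sum_update_lt_sum ((2 - ·) ∘ z) (i := i) (a := 2 - 2) (by simp [hzi])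
  rwa [← comp_update] at this

theorem jointCDF_eq_binary {f : Model n} (hf : IsModel f) (hIA : SatisfiesIA f)
    {z : Fin n → ℕ} {p : Fin n → ℕ → ℝ} (hp : ∀ k, IsPMF (z k) (p k))
    {s : Fin n → ℕ} (hs : s ∈ prodBox z) :
    jointCDF (f z p) s =
      jointCDF (f (fun _ => 2) (fun k => binPMF (pmfCDF (p k) (s k)))) (fun _ => 1) := by
  by_cases hred : ∃ i, 2 ≤ s i ∨ s i + 2 ≤ z i
  · obtain ⟨i, hi⟩ := hred
    have hsi := mem_prodBox.1 hs i
    obtain ⟨j, s', hj, hs', rfl⟩ : ∃ j s', j ∈ Icc 1 (z i - 1) ∧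
        s' ∈ prodBox (update z i (z i - 1)) ∧ update s' i (collapseCut j (s' i)) = s := by
      rcases hi with h | h
      · refine ⟨s i - 1, update s i (s i - 1), by rw [mem_Icc]; omega,
          update_mem_prodBox_update hs i (by omega) (by omega), ?_⟩
        rw [update_self, collapseCut, if_neg (lt_irrefl _), update_idem,
          Nat.sub_add_cancel (by omega), update_eq_self]
      · refine ⟨z i - 1, s, by rw [mem_Icc]; omega, ?_, ?_⟩
        · simpa using
            update_mem_prodBox_update hs i (a := s i) (b := z i - 1) (by omega) (by omega)
        · rw [collapseCut, if_pos (by omega), update_eq_self]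
    rw [← hIA.jointCDF_collapse hp hj hs',
      jointCDF_eq_binary hf hIA (isPMF_update hp i (isPMF_collapsePM (hp i) hj)) hs']
    simp only [pmfCDF_update_collapsePM (mem_Icc.1 hj).1]
  · push Not at hred
    have hsz := mem_prodBox.1 hs
    obtain rfl : s = fun _ => 1 := funext fun k => by have := hsz k; have := hred k; omega
    exact jointCDF_ones_eq_binary hf hIA hp fun k => by have := hsz k; have := hred k; omega
termination_by ∑ k, z k
decreasing_by
  exact sum_update_lt_sum z (by rw [mem_Icc] at hj; omega)

end

/-- under IA, the CDF of `f(p)` at `s` is determined solely by the vector of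
marginal CDF values at `s`: it equals the mass `f(b_x)` assigns to `(1,…,1)`, where
`x = (F_{p₁}(s₁),…,F_{pₙ}(sₙ))` and `b_x` is the tuple of binary distributions. -/
theorem IA_cdf_binary (n : ℕ) (f : Model n) (hf : IsModel f) (hIA : SatisfiesIA f)
    (z : Fin n → ℕ) (p : Fin n → ℕ → ℝ) (hp : ∀ i, IsPMF (z i) (p i))
    (s : Fin n → ℕ) (hs : s ∈ prodBox z) :
    jointCDF (f z p) s =
      f (fun _ => 2) (fun i => binPMF (pmfCDF (p i) (s i))) (fun _ => 1) := by
  rw [jointCDF_eq_binary hf hIA hp hs, jointCDF_const_one]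
end
end

section
/- Let C be a copula model satisfying M-neutrality for M = [m] ⊆ [n]. Then the probability measure P_C with CDF C satisfies: the coordinates in M are mutually independent, independent of the coordinates in [n]∖M, and each uniformly distributed; equivalently C(x) = (∏_{i∈M} xᵢ)·C̃((x_j)_{j∈[n]∖M}) where C̃ is an (n−m)-dimensional copula. -/
open MeasureTheory Finset Function

noncomputable section

/-!
For `i ∈ M`, probe the model with the pmf `(a, b, 1 - a - b)` on `{1, 2, 3}` in coordinate `i`
and the binary pmfs `(x j, 1 - x j)` elsewhere. At the cell `(1, …, 1)` the copula identity gives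
`C (x[i ↦ a])`, at the cell with `i`-th entry `2` it gives `C (x[i ↦ a + b])`, and neutrality under
the swap of bins `1` and `2` identifies the extra mass with `C (x[i ↦ b])`. Hence `t ↦ C (x[i ↦ t])`
is additive and nonnegative on `[0, 1]`, so linear; peeling off the coordinates of `M` one at a
time leaves `C` evaluated with ones on `M`, which is the CDF of the image of the copula measure
under restriction to the remaining coordinates, since that measure lives on `[0, 1]ⁿ`.
-/

section AdditiveOnUnitInterval

variable {g : ℝ → ℝ}
  (hadd : ∀ a b : ℝ, 0 ≤ a → 0 ≤ b → a + b ≤ 1 → g (a + b) = g a + g b)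
include hadd

lemma map_zero_of_additiveOn_unitInterval : g 0 = 0 := by
  simpa using hadd 0 0 le_rfl le_rfl (by norm_num)

lemma map_natCast_mul_of_additiveOn_unitInterval (k : ℕ) {u : ℝ} (hu : 0 ≤ u)
    (hku : k * u ≤ 1) : g (k * u) = k * g u := by
  induction k with
  | zero => simpa using map_zero_of_additiveOn_unitInterval hadd
  | succ k ih =>
    push_cast at hku ⊢
    rw [add_mul, one_mul] at hku ⊢
    rw [hadd _ _ (by positivity) hu hku, ih (by linarith)]
    ring

variable (hnn : ∀ t ∈ Set.Icc (0 : ℝ) 1, 0 ≤ g t)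
include hnn

lemma abs_sub_mul_le_of_additiveOn_unitInterval {t : ℝ} (ht : t ∈ Set.Icc (0 : ℝ) 1)
    {q : ℕ} (hq : 0 < q) : |g t - t * g 1| ≤ g 1 / q := by
  have hq' : (0 : ℝ) < q := Nat.cast_pos.mpr hq
  have hq1 : (1 : ℝ) ≤ q := Nat.one_le_cast.mpr hq
  set u : ℝ := 1 / q
  have hu : 0 ≤ u := by positivity
  have hu1 : u ≤ 1 := by simpa [u] using inv_le_one_of_one_le₀ hq1
  have hqu : (q : ℝ) * u = 1 := mul_one_div_cancel hq'.ne'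
  have hgu : g u = g 1 / q := by
    have := map_natCast_mul_of_additiveOn_unitInterval hadd q hu hqu.le
    rw [hqu] at this
    field_simp; linarith
  set k := ⌊t * q⌋₊
  have hk : (k : ℝ) ≤ t * q := Nat.floor_le (by nlinarith [ht.1])
  have hk' : t * q < k + 1 := Nat.lt_floor_add_one _
  set r := t - k * u
  have hr0 : 0 ≤ r := by simp only [r, u]; field_simp; linarith
  have hr1 : r ≤ u := by simp only [r, u]; field_simp; linarith
  have hgt : g t = k * (g 1 / q) + g r := by
    rw [← hgu, ← map_natCast_mul_of_additiveOn_unitInterval hadd k hu (by linarith [ht.2]),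
      ← hadd _ _ (by positivity) hr0 (by linarith [ht.2]), add_sub_cancel]
  have hgr : g r ≤ g 1 / q := by
    rw [← hgu, ← add_sub_cancel r u, hadd _ _ hr0 (by linarith) (by linarith)]
    linarith [hnn (u - r) ⟨by linarith, by linarith⟩]
  have hrg : r * g 1 ≤ g 1 / q := by
    rw [div_eq_mul_inv, mul_comm, ← one_div]
    exact mul_le_mul_of_nonneg_left hr1 (hnn 1 ⟨zero_le_one, le_rfl⟩)
  have : g t - t * g 1 = g r - r * g 1 := by
    rw [hgt]; simp only [r, u]; field_simp; ring
  rw [this]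
  exact abs_sub_le_of_nonneg_of_le (hnn r ⟨hr0, hr1.trans hu1⟩) hgr
    (mul_nonneg hr0 (hnn 1 ⟨zero_le_one, le_rfl⟩)) hrg

theorem eq_mul_of_additiveOn_unitInterval {t : ℝ} (ht : t ∈ Set.Icc (0 : ℝ) 1) :
    g t = t * g 1 := by
  have hle : |g t - t * g 1| ≤ 0 :=
    ge_of_tendsto (tendsto_const_div_atTop_nhds_zero_nat (g 1)) <|
      (Filter.eventually_gt_atTop 0).mono fun q hq =>
        abs_sub_mul_le_of_additiveOn_unitInterval hadd hnn ht hq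
  linarith [abs_nonpos_iff.mp hle]

end AdditiveOnUnitInterval

section CopulaMarginals

lemma extend_one_mem_Icc {ι κ : Type*} {e : κ → ι} (he : Injective e) {y : κ → ℝ}
    (hy : ∀ k, y k ∈ Set.Icc (0 : ℝ) 1) (i : ι) : extend e y 1 i ∈ Set.Icc (0 : ℝ) 1 := by
  by_cases hi : ∃ k, e k = i
  · obtain ⟨k, rfl⟩ := hi
    rw [he.extend_apply]
    exact hy k
  · rw [extend_apply' _ _ _ hi]
    exact ⟨zero_le_one, le_rfl⟩

lemma update_mem_Icc {ι : Type*} [DecidableEq ι] {x : ι → ℝ}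
    (hx : ∀ j, x j ∈ Set.Icc (0 : ℝ) 1) (i : ι) {t : ℝ} (ht : t ∈ Set.Icc (0 : ℝ) 1) (j : ι) :
    update x i t j ∈ Set.Icc (0 : ℝ) 1 := by
  rcases eq_or_ne j i with rfl | hj
  · rwa [update_self]
  · rw [update_of_ne hj]; exact hx j

variable {ι κ : Type*} [Fintype ι] [Fintype κ]

lemma IsCopulaMeasure.ae_le_one {μ : Measure (ι → ℝ)} (hμ : IsCopulaMeasure μ) :
    ∀ᵐ t ∂μ, ∀ i, t i ≤ 1 := by
  refine ae_all_iff.mpr fun i =>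
    ae_of_ae_map (p := fun u => u ≤ 1) (measurable_pi_apply i).aemeasurable ?_
  rw [hμ.2 i, unif01]
  exact (ae_restrict_mem measurableSet_Icc).mono fun _ h => h.2

lemma IsCopulaMeasure.map_comp {μ : Measure (ι → ℝ)} (hμ : IsCopulaMeasure μ) (e : κ → ι) :
    IsCopulaMeasure (μ.map fun t => t ∘ e) := by
  have he : Measurable fun t : ι → ℝ => t ∘ e := by fun_prop
  have := hμ.1
  refine ⟨Measure.isProbabilityMeasure_map he.aemeasurable, fun k => ?_⟩
  rw [Measure.map_map (measurable_pi_apply k) he]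
  exact hμ.2 (e k)

lemma IsCopula.nonneg {C : (ι → ℝ) → ℝ} (hC : IsCopula C) {x : ι → ℝ}
    (hx : ∀ i, x i ∈ Set.Icc (0 : ℝ) 1) : 0 ≤ C x := by
  obtain ⟨μ, -, hμC⟩ := hC
  exact hμC x hx ▸ ENNReal.toReal_nonneg

theorem IsCopula.comp_extend_one {C : (ι → ℝ) → ℝ} (hC : IsCopula C) {e : κ → ι}
    (he : Injective e) : IsCopula fun y => C (extend e y 1) := by
  obtain ⟨μ, hμ, hμC⟩ := hC
  refine ⟨μ.map fun t => t ∘ e, hμ.map_comp e, fun y hy => ?_⟩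
  dsimp only
  rw [← hμC _ (extend_one_mem_Icc he hy),
    Measure.map_apply (by fun_prop) (show MeasurableSet {t : κ → ℝ | ∀ k, t k ≤ y k} from
      measurableSet_Iic)]
  congr 1
  refine measure_congr (hμ.ae_le_one.mono fun t ht => propext ⟨fun h i => ?_, fun h k => ?_⟩)
  · by_cases hi : ∃ k, e k = i
    · obtain ⟨k, rfl⟩ := hi
      rw [he.extend_apply]
      exact h k
    · rw [extend_apply' _ _ _ hi]
      exact ht i
  · simpa only [comp_apply, he.extend_apply] using h (e k)

end CopulaMarginals

section ProbeMarginals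

def triPMF (a b : ℝ) : ℕ → ℝ :=
  fun s => if s = 1 then a else if s = 2 then b else if s = 3 then 1 - a - b else 0

lemma isPMF_binPMF_s14 {t : ℝ} (ht : t ∈ Set.Icc (0 : ℝ) 1) : IsPMF 2 (binPMF t) := by
  refine ⟨fun s => ?_, fun s hs => ?_, ?_⟩
  · unfold binPMF; split_ifs <;> linarith [ht.1, ht.2]
  · simp only [Finset.mem_Icc, not_and_or, not_le] at hs
    unfold binPMF; split_ifs <;> first | rfl | omega
  · simp [binPMF, show Finset.Icc 1 2 = {1, 2} from rfl]

lemma isPMF_triPMF {a b : ℝ} (ha : 0 ≤ a) (hb : 0 ≤ b) (hab : a + b ≤ 1) :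
    IsPMF 3 (triPMF a b) := by
  refine ⟨fun s => ?_, fun s hs => ?_, ?_⟩
  · unfold triPMF; split_ifs <;> linarith
  · simp only [Finset.mem_Icc, not_and_or, not_le] at hs
    unfold triPMF; split_ifs <;> first | rfl | omega
  · norm_num [triPMF, show Finset.Icc 1 3 = {1, 2, 3} from rfl]

lemma triPMF_comp_swap (a b : ℝ) : (fun t => triPMF a b (Equiv.swap 1 2 t)) = triPMF b a := by
  funext t
  rcases eq_or_ne t 1 with rfl | h1
  · simp [triPMF]
  rcases eq_or_ne t 2 with rfl | h2
  · simp [triPMF]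
  simp [Equiv.swap_apply_of_ne_of_ne h1 h2, triPMF, h1, h2, sub_sub, add_comm]

lemma pmfCDF_one (q : ℕ → ℝ) : pmfCDF q 1 = q 1 := by
  simp [pmfCDF]

lemma pmfCDF_two (q : ℕ → ℝ) : pmfCDF q 2 = q 1 + q 2 := by
  simp [pmfCDF, show Finset.Icc 1 2 = {1, 2} from rfl]

lemma jointCDF_one {n : ℕ} (g : (Fin n → ℕ) → ℝ) : jointCDF g (fun _ => 1) = g fun _ => 1 := by
  simp [jointCDF, Fintype.piFinset_singleton]

lemma jointCDF_update_one_two {n : ℕ} (g : (Fin n → ℕ) → ℝ) (i : Fin n) :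
    jointCDF g (update (fun _ => 1) i 2) = g (fun _ => 1) + g (update (fun _ => 1) i 2) := by
  have hbox : (Fintype.piFinset fun j => Finset.Icc 1 (update (fun _ => 1) i 2 j)) =
      {fun _ => 1, update (fun _ => 1) i 2} := by
    ext t
    simp only [Fintype.mem_piFinset, Finset.mem_Icc, Finset.mem_insert, Finset.mem_singleton,
      funext_iff, update_apply]
    constructor
    · intro h
      by_cases hti : t i = 1
      · left; intro j; grind
      · right; intro j; grind
    · rintro (h | h) j <;> grind
  rw [jointCDF, hbox, Finset.sum_pair]
  intro h
  simpa using congrFun h i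

end ProbeMarginals

section CopulaModel

variable {n m : ℕ} {f : Model n} {C : (Fin n → ℝ) → ℝ}

def probeBins (i : Fin n) : Fin n → ℕ := update (fun _ => 2) i 3

def probeMarginals (x : Fin n → ℝ) (i : Fin n) (q : ℕ → ℝ) : Fin n → ℕ → ℝ :=
  update (fun j => binPMF (x j)) i q

lemma isPMF_probeMarginals {x : Fin n → ℝ} (hx : ∀ j, x j ∈ Set.Icc (0 : ℝ) 1) (i : Fin n)
    {q : ℕ → ℝ} (hq : IsPMF 3 q) (j : Fin n) :
    IsPMF (probeBins i j) (probeMarginals x i q j) := by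
  rcases eq_or_ne j i with rfl | hj
  · simpa [probeBins, probeMarginals] using hq
  · simpa [probeBins, probeMarginals, hj] using isPMF_binPMF_s14 (hx j)

lemma update_one_mem_prodBox_probeBins (i : Fin n) {k : ℕ} (hk : k ∈ Finset.Icc 1 3) :
    update (fun _ => 1) i k ∈ prodBox (probeBins i) := by
  simp only [prodBox, probeBins, Fintype.mem_piFinset]
  intro j
  rcases eq_or_ne j i with rfl | hj
  · simpa using hk
  · simp [hj]

lemma IsCopulaModelWith.eq_jointCDF_probe (hC : IsCopulaModelWith f C) {x : Fin n → ℝ}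
    (hx : ∀ j, x j ∈ Set.Icc (0 : ℝ) 1) (i : Fin n) {q : ℕ → ℝ} (hq : IsPMF 3 q) {k : ℕ}
    (hk : k ∈ Finset.Icc 1 3) :
    C (update x i (pmfCDF q k)) =
      jointCDF (f (probeBins i) (probeMarginals x i q)) (update (fun _ => 1) i k) := by
  rw [hC.2 _ _ (isPMF_probeMarginals hx i hq) _ (update_one_mem_prodBox_probeBins i hk)]
  congr 1
  funext j
  rcases eq_or_ne j i with rfl | hj
  · simp [probeMarginals]
  · simp [probeMarginals, hj, pmfCDF_one, binPMF]

theorem IsCopulaModelWith.map_add_of_mNeutral (hC : IsCopulaModelWith f C) (hN : MNeutral f m)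
    {x : Fin n → ℝ} (hx : ∀ j, x j ∈ Set.Icc (0 : ℝ) 1) {i : Fin n} (hi : (i : ℕ) < m)
    {a b : ℝ} (ha : 0 ≤ a) (hb : 0 ≤ b) (hab : a + b ≤ 1) :
    C (update x i (a + b)) = C (update x i a) + C (update x i b) := by
  set p : ℝ → ℝ → Fin n → ℕ → ℝ := fun a b => probeMarginals x i (triPMF a b)
  have h₁ : C (update x i a) = f (probeBins i) (p a b) (fun _ => 1) := by
    simpa [pmfCDF_one, jointCDF_one, triPMF] using
      hC.eq_jointCDF_probe hx i (isPMF_triPMF ha hb hab) (k := 1) (by simp)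
  have h₂ : C (update x i (a + b)) = f (probeBins i) (p a b) (fun _ => 1) +
      f (probeBins i) (p a b) (update (fun _ => 1) i 2) := by
    simpa [pmfCDF_two, jointCDF_update_one_two, triPMF] using
      hC.eq_jointCDF_probe hx i (isPMF_triPMF ha hb hab) (k := 2) (by simp)
  have h₃ : C (update x i b) = f (probeBins i) (p b a) (fun _ => 1) := by
    simpa [pmfCDF_one, jointCDF_one, triPMF] using
      hC.eq_jointCDF_probe hx i (isPMF_triPMF hb ha (by linarith)) (k := 1) (by simp)
  have hswap : f (probeBins i) (p b a) (fun _ => 1) =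
      f (probeBins i) (p a b) (update (fun _ => 1) i 2) := by
    have hσ : PermOn (probeBins i i) (Equiv.swap 1 2) := by
      intro t ht
      simp only [probeBins, update_self, Finset.mem_Icc] at ht
      exact Equiv.swap_apply_of_ne_of_ne (by omega) (by omega)
    have := hN _ _ (isPMF_probeMarginals hx i (isPMF_triPMF ha hb hab)) i hi _ hσ _
      (by simpa using update_one_mem_prodBox_probeBins i (k := 1) (by simp))
    simp only [probeMarginals, update_idem, update_self, triPMF_comp_swap] at this
    exact this
  rw [h₁, h₂, h₃, hswap]

theorem IsCopulaModelWith.eq_mul_update_one_of_mNeutral (hC : IsCopulaModelWith f C)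
    (hN : MNeutral f m) {x : Fin n → ℝ} (hx : ∀ j, x j ∈ Set.Icc (0 : ℝ) 1) {i : Fin n}
    (hi : (i : ℕ) < m) : C x = x i * C (update x i 1) := by
  simpa using eq_mul_of_additiveOn_unitInterval (g := fun t => C (update x i t))
    (fun a b ha hb hab => hC.map_add_of_mNeutral hN hx hi ha hb hab)
    (fun t ht => hC.1.nonneg (update_mem_Icc hx i ht)) (hx i)

theorem IsCopulaModelWith.eq_prod_mul_piecewise_of_mNeutral (hC : IsCopulaModelWith f C)
    (hN : MNeutral f m) {x : Fin n → ℝ} (hx : ∀ j, x j ∈ Set.Icc (0 : ℝ) 1)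
    (S : Finset (Fin n)) (hS : ∀ i ∈ S, (i : ℕ) < m) :
    C x = (∏ i ∈ S, x i) * C (S.piecewise 1 x) := by
  induction S using Finset.induction_on with
  | empty => simp
  | insert a S haS ih =>
    have hy : ∀ j, S.piecewise 1 x j ∈ Set.Icc (0 : ℝ) 1 := fun j => by
      by_cases hj : j ∈ S <;> simp [hj, hx j]
    rw [ih fun i hi => hS i (Finset.mem_insert_of_mem hi),
      hC.eq_mul_update_one_of_mNeutral hN hy (hS a (Finset.mem_insert_self a S)),
      Finset.piecewise_eq_of_notMem _ _ _ haS, Finset.prod_insert haS, Finset.piecewise_insert]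
    simp only [Pi.one_apply]
    ring

end CopulaModel

theorem copulaModel_mNeutral_factorizes_general (n m : ℕ) (f : Model n)
    (C : (Fin n → ℝ) → ℝ) (hC : IsCopulaModelWith f C)
    (hN : MNeutral f m) :
    ∃ Ct : ({i : Fin n // m ≤ (i : ℕ)} → ℝ) → ℝ, IsCopula Ct ∧
      ∀ x : Fin n → ℝ, (∀ i, x i ∈ Set.Icc (0 : ℝ) 1) →
        C x = (∏ i ∈ Finset.univ.filter fun i : Fin n => (i : ℕ) < m, x i) *
          Ct fun j => x j.1 := by
  refine ⟨fun y => C (extend Subtype.val y 1), hC.1.comp_extend_one Subtype.val_injective,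
    fun x hx => ?_⟩
  rw [hC.eq_prod_mul_piecewise_of_mNeutral hN hx _ fun i hi => (Finset.mem_filter.mp hi).2]
  congr 2
  funext i
  by_cases hi : (i : ℕ) < m
  · rw [Finset.piecewise_eq_of_mem _ _ _ (by simpa using hi), extend_apply' _ _ _ ?_]
    rintro ⟨j, rfl⟩
    exact absurd j.2 (not_le.mpr hi)
  · rw [Finset.piecewise_eq_of_notMem _ _ _ (by simpa using hi)]
    exact (Subtype.val_injective.extend_apply (fun j : {i : Fin n // m ≤ (i : ℕ)} => x j) 1
      ⟨i, not_lt.mp hi⟩).symm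

/-- a copula model satisfying `M`-neutrality (with `M = [m]`) has a copula
of the form `C(x) = (∏_{i∈M} xᵢ) · C̃((x_j)_{j∉M})` for an `(n−m)`-dimensional copula `C̃`. -/
theorem copulaModel_mNeutral_factorizes (n m : ℕ) (hm : m ≤ n) (f : Model n)
    (C : (Fin n → ℝ) → ℝ) (hf : IsModel f) (hC : IsCopulaModelWith f C)
    (hN : MNeutral f m) :
    ∃ Ct : ({i : Fin n // m ≤ (i : ℕ)} → ℝ) → ℝ, IsCopula Ct ∧
      ∀ x : Fin n → ℝ, (∀ i, x i ∈ Set.Icc (0 : ℝ) 1) →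
        C x = (∏ i ∈ Finset.univ.filter fun i : Fin n => (i : ℕ) < m, x i) *
          Ct fun j => x j.1 :=
  copulaModel_mNeutral_factorizes_general n m f C hC hN
end
end
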